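/- Under the setup of Lemma on z-iterates of REBK: if z^0 ∈ b + ran(A) and 0 < α < 2/β^J, then for all k, E‖z^k − b_⊥‖₂² ≤ ρ^k ‖z^0 − b_⊥‖₂², where ρ = 1 − (2α − α²β^J)σ_r(A)²/‖A‖_F² and b_⊥ = (I − AA†)b. In particular ρ ∈ [0,1). -/

import Mathlib

open Matrix

/-- The squared Frobenius norm of a real matrix. -/
noncomputable def frobSq {ι κ : Type*} [Fintype ι] [Fintype κ] (A : Matrix ι κ ℝ) : ℝ :=
  ∑ i, ∑ j, (A i j) ^ 2

/-- The spectral (ℓ₂ operator) norm of a real matrix. -/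
noncomputable def specNorm {ι κ : Type*} [Fintype ι] [Fintype κ] [DecidableEq κ]
    (A : Matrix ι κ ℝ) : ℝ :=
  ‖LinearMap.toContinuousLinearMap (Matrix.toEuclideanLin A)‖

/-- The squared Euclidean norm of a vector. -/
noncomputable def norm2Sq {ι : Type*} [Fintype ι] (v : ι → ℝ) : ℝ := ∑ i, (v i) ^ 2

/-- `P` is the Moore–Penrose pseudoinverse of `A`. -/
def IsMoorePenrose {m n : ℕ} (A : Matrix (Fin m) (Fin n) ℝ)
    (P : Matrix (Fin n) (Fin m) ℝ) : Prop :=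
  A * P * A = A ∧ P * A * P = P ∧ (A * P)ᵀ = A * P ∧ (P * A)ᵀ = P * A

/-- The column submatrix of `A` indexed by the finite set `J`. -/
def colSub {m n : ℕ} (A : Matrix (Fin m) (Fin n) ℝ) (J : Finset (Fin n)) :
    Matrix (Fin m) J ℝ :=
  A.submatrix id (fun j => (j : Fin n))


/-!
The residual `e = z - b_⊥` stays in `ran A`, and since `A_Jᵀ b_⊥ = 0` it is updated by
`e ↦ e - (α / ‖A_J‖_F²) A_J A_Jᵀ e`. Using `‖A_J A_Jᵀ e‖² ≤ β^J ‖A_J‖_F² ‖A_Jᵀ e‖²`, one block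
step removes at least `(2α - α²β^J) ‖A_Jᵀ e‖² / ‖A_J‖_F²` from `‖e‖²`; averaging over the blocks
with weights `‖A_J‖_F² / ‖A‖_F²` turns this into `(2α - α²β^J) ‖Aᵀ e‖² / ‖A‖_F²`, and
`‖Aᵀ e‖² ≥ σ_r² ‖e‖²` on `ran A`. So one step contracts `E‖e‖²` by `ρ`. As the `i`-th step only
looks at the `i`-th sample, resampling that coordinate of the product law iterates the bound.
Finally `ρ ≥ 0` because the one-step bound at a nonzero `e ∈ ran A` dominates a nonnegative sum
by `ρ ‖e‖²`.
-/

open Finset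

section Norms

variable {ι κ : Type*} [Fintype ι] [Fintype κ]

lemma norm2Sq_eq_dotProduct (v : ι → ℝ) : norm2Sq v = v ⬝ᵥ v := by
  simp only [norm2Sq, dotProduct, sq]

lemma norm2Sq_eq_norm_toLp_sq (v : ι → ℝ) : norm2Sq v = ‖WithLp.toLp 2 v‖ ^ 2 := by
  rw [EuclideanSpace.real_norm_sq_eq]; rfl

lemma norm2Sq_nonneg (v : ι → ℝ) : 0 ≤ norm2Sq v :=
  sum_nonneg fun _ _ => sq_nonneg _

lemma norm2Sq_pos {v : ι → ℝ} (hv : v ≠ 0) : 0 < norm2Sq v := by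
  refine (norm2Sq_nonneg v).lt_of_ne' ?_
  rwa [Ne, norm2Sq_eq_dotProduct, dotProduct_self_eq_zero]

lemma norm2Sq_sub_smul (u x : ι → ℝ) (c : ℝ) :
    norm2Sq (u - c • x) = norm2Sq u - 2 * c * (u ⬝ᵥ x) + c ^ 2 * norm2Sq x := by
  simp only [norm2Sq_eq_dotProduct, sub_dotProduct, dotProduct_sub, smul_dotProduct,
    dotProduct_smul, dotProduct_comm x u, smul_eq_mul]
  ring

lemma dotProduct_mul_transpose_mulVec (C : Matrix ι κ ℝ) (u : ι → ℝ) :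
    u ⬝ᵥ (C * Cᵀ) *ᵥ u = norm2Sq (Cᵀ *ᵥ u) := by
  rw [← mulVec_mulVec, dotProduct_mulVec, norm2Sq_eq_dotProduct, mulVec_transpose]

lemma frobSq_pos {M : Matrix ι κ ℝ} (hM : M ≠ 0) : 0 < frobSq M := by
  obtain ⟨i, j, hij⟩ : ∃ i j, M i j ≠ 0 := by
    by_contra! h
    exact hM (ext h)
  exact sum_pos' (fun i _ => sum_nonneg fun j _ => sq_nonneg _)
    ⟨i, mem_univ _, sum_pos' (fun j _ => sq_nonneg _) ⟨j, mem_univ _, by positivity⟩⟩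

variable [DecidableEq κ]

lemma norm2Sq_mulVec_le (C : Matrix ι κ ℝ) (w : κ → ℝ) :
    norm2Sq (C *ᵥ w) ≤ specNorm C ^ 2 * norm2Sq w := by
  rw [norm2Sq_eq_norm_toLp_sq, norm2Sq_eq_norm_toLp_sq, ← mul_pow]
  exact pow_le_pow_left₀ (norm_nonneg _)
    ((LinearMap.toContinuousLinearMap (toEuclideanLin C)).le_opNorm (WithLp.toLp 2 w)) 2

lemma specNorm_pos {C : Matrix ι κ ℝ} (hC : C ≠ 0) : 0 < specNorm C := by
  rw [specNorm, norm_pos_iff]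
  intro h
  exact hC (toEuclideanLin.map_eq_zero_iff.1 (LinearMap.toContinuousLinearMap.map_eq_zero_iff.1 h))

lemma norm2Sq_sub_smul_mul_transpose_mulVec_le (C : Matrix ι κ ℝ) (hC : 0 < frobSq C) {β : ℝ}
    (hβ : specNorm C ^ 2 ≤ β * frobSq C) (α : ℝ) (u : ι → ℝ) :
    norm2Sq (u - (α / frobSq C) • (C * Cᵀ) *ᵥ u)
      ≤ norm2Sq u - (2 * α - α ^ 2 * β) / frobSq C * norm2Sq (Cᵀ *ᵥ u) := by
  have hCCt : norm2Sq ((C * Cᵀ) *ᵥ u) ≤ β * frobSq C * norm2Sq (Cᵀ *ᵥ u) := by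
    rw [← mulVec_mulVec]
    exact (norm2Sq_mulVec_le C _).trans (mul_le_mul_of_nonneg_right hβ (norm2Sq_nonneg _))
  rw [norm2Sq_sub_smul, dotProduct_mul_transpose_mulVec]
  calc _ ≤ norm2Sq u - 2 * (α / frobSq C) * norm2Sq (Cᵀ *ᵥ u)
        + (α / frobSq C) ^ 2 * (β * frobSq C * norm2Sq (Cᵀ *ᵥ u)) := by gcongr
    _ = _ := by field_simp; ring

end Norms

lemma mul_dotProduct_mulVec_le_norm2Sq_mulVec {n : Type*} [Fintype n] [DecidableEq n]
    {M : Matrix n n ℝ} (hM : M.IsHermitian) {c : ℝ}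
    (hc : ∀ i, c * hM.eigenvalues i ≤ hM.eigenvalues i ^ 2) (w : n → ℝ) :
    c * (w ⬝ᵥ M *ᵥ w) ≤ norm2Sq (M *ᵥ w) := by
  obtain ⟨U, hUU, hMU⟩ : ∃ U : Matrix n n ℝ, star U * U = 1 ∧
      M = U * diagonal hM.eigenvalues * star U :=
    ⟨_, Unitary.coe_star_mul_self _,
      by simpa [Unitary.conjStarAlgAut_apply] using hM.spectral_theorem⟩
  have hMw : norm2Sq (M *ᵥ w) = w ⬝ᵥ (M * M) *ᵥ w := by
    have hMt : Mᵀ = M := by simpa [conjTranspose_eq_transpose_of_trivial] using hM.eq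
    rw [norm2Sq_eq_dotProduct, ← mulVec_mulVec, dotProduct_mulVec, ← mulVec_transpose, hMt,
      dotProduct_comm]
  rw [hMw, ← sub_nonneg, ← smul_eq_mul c, ← dotProduct_smul, ← smul_mulVec, ← dotProduct_sub,
    ← sub_mulVec]
  generalize hM.eigenvalues = d at hc hMU
  subst hMU
  have hN : (U * diagonal d * star U) * (U * diagonal d * star U) - c • (U * diagonal d * star U)
      = U * diagonal (fun i => d i ^ 2 - c * d i) * Uᴴ := by
    have hDD : diagonal d * diagonal d - c • diagonal d
        = diagonal (fun i => d i ^ 2 - c * d i) := by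
      rw [diagonal_mul_diagonal, ← diagonal_smul, diagonal_sub]
      simp only [sq, Pi.smul_def, smul_eq_mul]
    rw [← hDD, ← star_eq_conjTranspose, mul_sub, sub_mul, mul_smul_comm, smul_mul_assoc]
    simp only [mul_assoc]
    rw [← mul_assoc (star U) U, hUU, one_mul]
  rw [hN]
  simpa using ((PosSemidef.diagonal fun i => sub_nonneg.2 (hc i)).mul_mul_conjTranspose_same
    U).dotProduct_mulVec_nonneg w

lemma sq_mul_norm2Sq_le_norm2Sq_transpose_mulVec {m n : ℕ} {A : Matrix (Fin m) (Fin n) ℝ}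
    (hH : (Aᵀ * A).IsHermitian) {σ : ℝ}
    (hσ : ∀ i, hH.eigenvalues i ≠ 0 → σ ^ 2 ≤ hH.eigenvalues i) {u : Fin m → ℝ}
    (hu : u ∈ LinearMap.range A.mulVecLin) : σ ^ 2 * norm2Sq u ≤ norm2Sq (Aᵀ *ᵥ u) := by
  obtain ⟨w, rfl⟩ := hu
  have hpsd : (Aᵀ * A).PosSemidef := by
    simpa [conjTranspose_eq_transpose_of_trivial] using posSemidef_conjTranspose_mul_self A
  have hc : ∀ i, σ ^ 2 * hH.eigenvalues i ≤ hH.eigenvalues i ^ 2 := fun i => by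
    rcases eq_or_ne (hH.eigenvalues i) 0 with h | h
    · simp [h]
    · rw [sq (hH.eigenvalues i)]
      exact mul_le_mul_of_nonneg_right (hσ i h) (hpsd.eigenvalues_nonneg i)
  have hw : w ⬝ᵥ (Aᵀ * A) *ᵥ w = norm2Sq (A *ᵥ w) := by
    simpa using dotProduct_mul_transpose_mulVec Aᵀ w
  have := mul_dotProduct_mulVec_le_norm2Sq_mulVec hH hc w
  rwa [hw, ← mulVec_mulVec] at this

lemma IsMoorePenrose.transpose_mul_one_sub_mul_eq_zero {m n : ℕ}
    {A : Matrix (Fin m) (Fin n) ℝ} {P : Matrix (Fin n) (Fin m) ℝ} (hP : IsMoorePenrose A P) :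
    Aᵀ * (1 - A * P) = 0 := by
  have hAt : Aᵀ * (A * P) = Aᵀ := by
    simpa only [transpose_mul, hP.2.2.1] using congrArg transpose hP.1
  rw [Matrix.mul_sub, Matrix.mul_one, hAt, sub_self]

lemma add_mulVec_sub_one_sub_mul_mulVec {m n : ℕ} (A : Matrix (Fin m) (Fin n) ℝ)
    (P : Matrix (Fin n) (Fin m) ℝ) (b : Fin m → ℝ) (v : Fin n → ℝ) :
    b + A *ᵥ v - (1 - A * P) *ᵥ b = A *ᵥ (v + P *ᵥ b) := by
  simp only [mulVec_add, mulVec_mulVec, sub_mulVec, one_mulVec]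
  abel

lemma colSub_mulVec_mem_range {m n : ℕ} (A : Matrix (Fin m) (Fin n) ℝ) (J : Finset (Fin n))
    (y : J → ℝ) : colSub A J *ᵥ y ∈ LinearMap.range A.mulVecLin := by
  rw [range_mulVecLin, mulVec_eq_sum]
  refine Submodule.sum_mem _ fun l _ => ?_
  rw [op_smul_eq_smul]
  exact Submodule.smul_mem _ _ (Submodule.subset_span ⟨(l : Fin n), rfl⟩)

lemma nonneg_of_forall_mem_range_nonneg_mul_norm2Sq {m n : ℕ} {A : Matrix (Fin m) (Fin n) ℝ}
    (hA : A ≠ 0) {ρ : ℝ} (h : ∀ u ∈ LinearMap.range A.mulVecLin, 0 ≤ ρ * norm2Sq u) : 0 ≤ ρ := by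
  obtain ⟨w, hw⟩ : ∃ w, A *ᵥ w ≠ 0 := by
    by_contra! hzero
    exact hA (ext_of_mulVec_single fun i => by rw [hzero, zero_mulVec])
  exact nonneg_of_mul_nonneg_left (h _ ⟨w, rfl⟩) (norm2Sq_pos hw)

lemma colSub_mul_transpose_mulVec_eq_zero {m n : ℕ} {A : Matrix (Fin m) (Fin n) ℝ}
    {r : Fin m → ℝ} (hr : Aᵀ *ᵥ r = 0) (J : Finset (Fin n)) :
    (colSub A J * (colSub A J)ᵀ) *ᵥ r = 0 := by
  rw [← mulVec_mulVec, show (colSub A J)ᵀ *ᵥ r = 0 from funext fun l => congrFun hr l,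
    mulVec_zero]

section Blocks

variable {m n t : ℕ} (A : Matrix (Fin m) (Fin n) ℝ) {B : Fin t → Finset (Fin n)}
  (hdisj : ∀ i j, i ≠ j → Disjoint (B i) (B j)) (hcover : ∀ l, ∃ j, l ∈ B j)
include hdisj hcover

lemma sum_sum_blocks (g : Fin n → ℝ) : ∑ j, ∑ l ∈ B j, g l = ∑ l, g l := by
  rw [← sum_biUnion fun i _ j _ hij => hdisj i j hij]
  exact sum_congr (eq_univ_of_forall fun l => by simpa using hcover l) fun _ _ => rfl

lemma sum_frobSq_colSub : ∑ j, frobSq (colSub A (B j)) = frobSq A := by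
  have (J : Finset (Fin n)) : frobSq (colSub A J) = ∑ l ∈ J, ∑ i, A i l ^ 2 := by
    rw [frobSq, sum_comm, ← sum_coe_sort J]; rfl
  simp only [this]
  rw [sum_sum_blocks hdisj hcover, frobSq, sum_comm]

lemma sum_norm2Sq_colSub_transpose_mulVec (u : Fin m → ℝ) :
    ∑ j, norm2Sq ((colSub A (B j))ᵀ *ᵥ u) = norm2Sq (Aᵀ *ᵥ u) := by
  have (J : Finset (Fin n)) : norm2Sq ((colSub A J)ᵀ *ᵥ u) = ∑ l ∈ J, (Aᵀ *ᵥ u) l ^ 2 := by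
    rw [norm2Sq, ← sum_coe_sort J]; rfl
  simp only [this]
  rw [sum_sum_blocks hdisj hcover, norm2Sq]

lemma sum_mul_norm2Sq_block_step_le (hA : A ≠ 0) (hne : ∀ j, colSub A (B j) ≠ 0) {β : ℝ}
    (hβ : ∀ j, specNorm (colSub A (B j)) ^ 2 ≤ β * frobSq (colSub A (B j)))
    {α : ℝ} (hα : 0 ≤ 2 * α - α ^ 2 * β) {σ : ℝ} {u : Fin m → ℝ}
    (hσ : σ ^ 2 * norm2Sq u ≤ norm2Sq (Aᵀ *ᵥ u)) :
    ∑ j, frobSq (colSub A (B j)) / frobSq A * norm2Sq (u - (α / frobSq (colSub A (B j))) •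
        (colSub A (B j) * (colSub A (B j))ᵀ) *ᵥ u)
      ≤ (1 - (2 * α - α ^ 2 * β) * σ ^ 2 / frobSq A) * norm2Sq u := by
  have hF := frobSq_pos hA
  set c := 2 * α - α ^ 2 * β
  calc _ ≤ ∑ j, frobSq (colSub A (B j)) / frobSq A *
          (norm2Sq u - c / frobSq (colSub A (B j)) * norm2Sq ((colSub A (B j))ᵀ *ᵥ u)) :=
        sum_le_sum fun j _ => mul_le_mul_of_nonneg_left
          (norm2Sq_sub_smul_mul_transpose_mulVec_le _ (frobSq_pos (hne j)) (hβ j) α u)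
          (div_nonneg (frobSq_pos (hne j)).le hF.le)
    _ = (∑ j, frobSq (colSub A (B j))) / frobSq A * norm2Sq u
          - c / frobSq A * ∑ j, norm2Sq ((colSub A (B j))ᵀ *ᵥ u) := by
        rw [sum_div, sum_mul, mul_sum, ← sum_sub_distrib]
        refine sum_congr rfl fun j _ => ?_
        have := (frobSq_pos (hne j)).ne'
        field_simp
    _ = norm2Sq u - c / frobSq A * norm2Sq (Aᵀ *ᵥ u) := by
        rw [sum_frobSq_colSub A hdisj hcover, div_self hF.ne', one_mul,
          sum_norm2Sq_colSub_transpose_mulVec A hdisj hcover]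
    _ ≤ norm2Sq u - c / frobSq A * (σ ^ 2 * norm2Sq u) := by gcongr
    _ = (1 - c * σ ^ 2 / frobSq A) * norm2Sq u := by ring

end Blocks

section RandomIteration

variable {κ : Type*} (p : κ → ℝ)

lemma mul_prod_update {ι : Type*} [Fintype ι] [DecidableEq ι] (ω : ι → κ) (i : ι) (j : κ) :
    p (ω i) * ∏ l, p (Function.update ω i j l) = p j * ∏ l, p (ω l) := by
  rw [Fintype.prod_eq_mul_prod_compl i, Fintype.prod_eq_mul_prod_compl i (fun l => p (ω l)),
    Function.update_self,
    prod_congr rfl fun l hl => by rw [Function.update_of_ne (by simpa using hl)]]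
  ring

lemma sum_prod_mul_sum_update {ι : Type*} [Fintype ι] [DecidableEq ι] [Fintype κ]
    (hp : ∑ j, p j = 1) (G : (ι → κ) → ℝ) (i : ι) :
    ∑ ω, (∏ l, p (ω l)) * ∑ j, p j * G (Function.update ω i j) = ∑ ω, (∏ l, p (ω l)) * G ω := by
  let σ : (ι → κ) × κ → (ι → κ) × κ := fun x => (Function.update x.1 i x.2, x.1 i)
  have hσ : Function.Involutive σ := fun x => by simp [σ]
  calc ∑ ω, (∏ l, p (ω l)) * ∑ j, p j * G (Function.update ω i j)
      = ∑ x : (ι → κ) × κ, p (x.1 i) * (∏ l, p (Function.update x.1 i x.2 l)) *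
          G (Function.update x.1 i x.2) := by
        rw [Fintype.sum_prod_type]
        refine sum_congr rfl fun ω _ => ?_
        rw [mul_sum]
        refine sum_congr rfl fun j _ => ?_
        rw [mul_prod_update]; ring
    _ = ∑ x : (ι → κ) × κ, p x.2 * (∏ l, p (x.1 l)) * G x.1 :=
        Equiv.sum_comp (hσ.toPerm σ) (fun x : (ι → κ) × κ => p x.2 * (∏ l, p (x.1 l)) * G x.1)
    _ = ∑ ω, (∏ l, p (ω l)) * G ω := by
        rw [Fintype.sum_prod_type]
        refine sum_congr rfl fun ω _ => ?_
        simp only [← sum_mul, hp, one_mul]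

variable {X : Type*} {k : ℕ} {T : κ → X → X} {x₀ : X} {Z : (Fin k → κ) → ℕ → X}
  (hZ0 : ∀ ω, Z ω 0 = x₀) (hZs : ∀ ω (i : Fin k), Z ω (i + 1) = T (ω i) (Z ω i))
include hZ0 hZs

lemma iterate_mem {S : Set X} (hS : ∀ j, Set.MapsTo (T j) S S) (hx₀ : x₀ ∈ S) (ω : Fin k → κ) :
    ∀ l ≤ k, Z ω l ∈ S
  | 0, _ => hZ0 ω ▸ hx₀
  | l + 1, hl => by
    have h := hZs ω ⟨l, hl⟩
    simp only at h
    exact h ▸ hS _ (iterate_mem hS hx₀ ω l (by omega))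

lemma iterate_update_eq (ω : Fin k → κ) (i : Fin k) (j : κ) :
    ∀ l ≤ (i : ℕ), Z (Function.update ω i j) l = Z ω l
  | 0, _ => by rw [hZ0, hZ0]
  | l + 1, hl => by
    have hli : (⟨l, by omega⟩ : Fin k) ≠ i := fun h => by rw [← h] at hl; simp at hl
    have h₁ := hZs (Function.update ω i j) ⟨l, by omega⟩
    have h₂ := hZs ω ⟨l, by omega⟩
    simp only at h₁ h₂
    rw [h₁, h₂, Function.update_of_ne hli, iterate_update_eq ω i j l (by omega)]

variable [Fintype κ]

lemma sum_prod_mul_iterate_succ_le (hp0 : ∀ j, 0 ≤ p j) (hp1 : ∑ j, p j = 1)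
    {S : Set X} (hS : ∀ j, Set.MapsTo (T j) S S) (hx₀ : x₀ ∈ S) (V : X → ℝ) {ρ : ℝ}
    (hV : ∀ x ∈ S, ∑ j, p j * V (T j x) ≤ ρ * V x) (i : Fin k) :
    ∑ ω, (∏ l, p (ω l)) * V (Z ω (i + 1)) ≤ ρ * ∑ ω, (∏ l, p (ω l)) * V (Z ω i) := by
  have hstep : ∀ ω j, Z (Function.update ω i j) (i + 1) = T j (Z ω i) := fun ω j => by
    rw [hZs, Function.update_self, iterate_update_eq hZ0 hZs ω i j i le_rfl]
  rw [← sum_prod_mul_sum_update p hp1 _ i, mul_sum]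
  refine sum_le_sum fun ω _ => ?_
  simp only [hstep]
  rw [mul_left_comm]
  exact mul_le_mul_of_nonneg_left (hV _ (iterate_mem hZ0 hZs hS hx₀ ω i i.2.le))
    (prod_nonneg fun l _ => hp0 _)

theorem sum_prod_mul_iterate_le (hp0 : ∀ j, 0 ≤ p j) (hp1 : ∑ j, p j = 1)
    {S : Set X} (hS : ∀ j, Set.MapsTo (T j) S S) (hx₀ : x₀ ∈ S) (V : X → ℝ) {ρ : ℝ} (hρ : 0 ≤ ρ)
    (hV : ∀ x ∈ S, ∑ j, p j * V (T j x) ≤ ρ * V x) :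
    ∑ ω, (∏ l, p (ω l)) * V (Z ω k) ≤ ρ ^ k * V x₀ := by
  suffices ∀ l ≤ k, ∑ ω, (∏ l, p (ω l)) * V (Z ω l) ≤ ρ ^ l * V x₀ from this k le_rfl
  intro l hl
  induction l with
  | zero =>
    simp only [hZ0, ← sum_mul, ← Fintype.prod_sum, hp1, prod_const_one, pow_zero, le_refl]
  | succ l ih =>
    calc ∑ ω, (∏ l, p (ω l)) * V (Z ω (l + 1))
        ≤ ρ * ∑ ω, (∏ l, p (ω l)) * V (Z ω l) :=
          sum_prod_mul_iterate_succ_le p hZ0 hZs hp0 hp1 hS hx₀ V hV ⟨l, hl⟩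
      _ ≤ ρ * (ρ ^ l * V x₀) := mul_le_mul_of_nonneg_left (ih (by omega)) hρ
      _ = ρ ^ (l + 1) * V x₀ := by ring

end RandomIteration

theorem stmt12 {m n t : ℕ} (A : Matrix (Fin m) (Fin n) ℝ) (hA : A ≠ 0)
    (hH : (Aᵀ * A).IsHermitian) (σr : ℝ) (hσr : 0 < σr)
    (hleast : IsLeast {x : ℝ | ∃ i, hH.eigenvalues i ≠ 0 ∧ x = hH.eigenvalues i} (σr ^ 2))
    (P : Matrix (Fin n) (Fin m) ℝ) (hP : IsMoorePenrose A P) (b : Fin m → ℝ)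
    (B : Fin t → Finset (Fin n))
    (hdisj : ∀ i j, i ≠ j → Disjoint (B i) (B j))
    (hcover : ∀ l : Fin n, ∃ j, l ∈ B j)
    (hne : ∀ j, colSub A (B j) ≠ 0)
    (βJ : ℝ)
    (hβ : IsGreatest
      {x : ℝ | ∃ j, x = specNorm (colSub A (B j)) ^ 2 / frobSq (colSub A (B j))} βJ)
    (α : ℝ) (hα1 : 0 < α) (hα2 : α < 2 / βJ)
    (z0 : Fin m → ℝ) (hz0 : ∃ v : Fin n → ℝ, z0 = b + A.mulVec v)
    (k : ℕ) (Z : (Fin k → Fin t) → ℕ → (Fin m → ℝ))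
    (hZ0 : ∀ ω, Z ω 0 = z0)
    (hZs : ∀ ω (i : Fin k), Z ω ((i : ℕ) + 1) = Z ω (i : ℕ) -
        (α / frobSq (colSub A (B (ω i)))) •
          ((colSub A (B (ω i))) * (colSub A (B (ω i)))ᵀ).mulVec (Z ω (i : ℕ))) :
    (0 ≤ 1 - (2 * α - α ^ 2 * βJ) * σr ^ 2 / frobSq A ∧
      1 - (2 * α - α ^ 2 * βJ) * σr ^ 2 / frobSq A < 1) ∧
    ∑ ω : Fin k → Fin t, (∏ i, frobSq (colSub A (B (ω i))) / frobSq A) *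
        norm2Sq (Z ω k - (1 - A * P).mulVec b)
      ≤ (1 - (2 * α - α ^ 2 * βJ) * σr ^ 2 / frobSq A) ^ k *
          norm2Sq (z0 - (1 - A * P).mulVec b) := by
  set ρ := 1 - (2 * α - α ^ 2 * βJ) * σr ^ 2 / frobSq A
  set r := (1 - A * P) *ᵥ b
  have hF := frobSq_pos hA
  have hf j := frobSq_pos (hne j)
  obtain ⟨j₀, hj₀⟩ := hβ.1
  have hβpos : 0 < βJ := hj₀ ▸ div_pos (pow_pos (specNorm_pos (hne j₀)) 2) (hf j₀)
  have hcoef : 0 < 2 * α - α ^ 2 * βJ := by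
    have := (lt_div_iff₀ hβpos).1 hα2
    nlinarith
  have hstep : ∀ u ∈ LinearMap.range A.mulVecLin,
      ∑ j, frobSq (colSub A (B j)) / frobSq A * norm2Sq (u - (α / frobSq (colSub A (B j))) •
        (colSub A (B j) * (colSub A (B j))ᵀ) *ᵥ u) ≤ ρ * norm2Sq u := fun u hu =>
    sum_mul_norm2Sq_block_step_le A hdisj hcover hA hne
      (fun j => (div_le_iff₀ (hf j)).1 (hβ.2 ⟨j, rfl⟩)) hcoef.le
      (sq_mul_norm2Sq_le_norm2Sq_transpose_mulVec hH (fun i hi => hleast.2 ⟨i, hi, rfl⟩) hu)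
  have hρ0 : 0 ≤ ρ := nonneg_of_forall_mem_range_nonneg_mul_norm2Sq hA fun u hu =>
    (sum_nonneg fun j _ => mul_nonneg (div_nonneg (hf j).le hF.le) (norm2Sq_nonneg _)).trans
      (hstep u hu)
  refine ⟨⟨hρ0, sub_lt_self 1 (div_pos (mul_pos hcoef (pow_pos hσr 2)) hF)⟩, ?_⟩
  have hr : Aᵀ *ᵥ r = 0 := by
    rw [mulVec_mulVec, hP.transpose_mul_one_sub_mul_eq_zero, zero_mulVec]
  refine sum_prod_mul_iterate_le (fun j => frobSq (colSub A (B j)) / frobSq A)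
    (Z := fun ω l => Z ω l - r) (fun ω => by rw [hZ0]) (fun ω i => ?_)
    (fun j => div_nonneg (hf j).le hF.le) ?_ (fun j u hu => ?_) ?_ norm2Sq hρ0 hstep
  · simp only [hZs, mulVec_sub, colSub_mul_transpose_mulVec_eq_zero hr, sub_zero]
    abel
  · rw [← sum_div, sum_frobSq_colSub A hdisj hcover, div_self hF.ne']
  · rw [← mulVec_mulVec]
    exact sub_mem hu (Submodule.smul_mem _ _ (colSub_mulVec_mem_range A _ _))
  · obtain ⟨v, rfl⟩ := hz0
    exact ⟨v + P *ᵥ b, (add_mulVec_sub_one_sub_mul_mulVec A P b v).symm⟩
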